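/- arXiv:1102.0787 — 2 statements merged into one kernel-verified Lean document; each statement's English description precedes it below -/
import Mathlib

section
/- Let S be a minimal surface of general type with K² > 1 (so K is nef and K² ≥ 2), and let E be an effective divisor with E² = -1 and K·E = 1. Then E is 1-connected, i.e., for every decomposition E = A + B with A, B > 0 effective one has A·B ≥ 1. -/
/-- An abstract model of a smooth minimal complex projective surface of general type:
`Div` is the group of divisor classes modulo numerical equivalence, `inter` the intersection
pairing, `Effective` the predicate "is the class of an effective divisor", and `K` the
canonical class.  The fields record facts that hold on every such surface: the canonical
class is nef, the adjunction/Riemann–Roch parity `C² + K·C ≡ 0 (mod 2)`, and the Hodge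
index theorem (an effective nonzero divisor orthogonal to a divisor of positive
self-intersection has negative self-intersection, and the determinant inequality). -/
structure MinimalSurfaceGT where
  Div : Type
  [grp : AddCommGroup Div]
  inter : Div → Div → ℤ
  inter_symm : ∀ A B, inter A B = inter B A
  inter_add_left : ∀ A B C, inter (A + B) C = inter A C + inter B C
  Effective : Div → Prop
  K : Div
  K_nef : ∀ C, Effective C → 0 ≤ inter K C
  K2_pos : 0 < inter K K
  adjunction_parity : ∀ C, 2 ∣ (inter C C + inter K C)
  hodge_index : ∀ D C, 0 < inter D D → inter D C = 0 → Effective C → C ≠ 0 →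
    inter C C < 0
  hodge_le : ∀ D C, 0 < inter D D → inter D D * inter C C ≤ inter D C * inter D C

attribute [instance] MinimalSurfaceGT.grp

/-- Lemma 2.5: let `S` be a minimal surface of general type with `K² > 1` and `E` an
effective divisor with `E² = -1` and `K·E = 1`.  Then `E` is 1-connected: for every
decomposition `E = A + B` with `A, B > 0` effective one has `A·B ≥ 1`. -/
theorem stmt3 (S : MinimalSurfaceGT) (hK2 : 1 < S.inter S.K S.K)
    (E : S.Div) (hEeff : S.Effective E) (hEne : E ≠ 0)
    (hE2 : S.inter E E = -1) (hKE : S.inter S.K E = 1) :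
    ∀ A B : S.Div, S.Effective A → A ≠ 0 → S.Effective B → B ≠ 0 → A + B = E →
      1 ≤ S.inter A B := by
  intro A B hA hAne hB hBne hsum
  have hKpos : 0 < S.inter S.K S.K := S.K2_pos
  have bound0 : ∀ C, S.Effective C → C ≠ 0 → S.inter S.K C = 0 → S.inter C C ≤ -2 := by
    intro C hC hCne h0
    have hneg := S.hodge_index S.K C hKpos h0 hC hCne
    have hpar := S.adjunction_parity C
    rw [h0] at hpar
    omega
  have bound1 : ∀ C, S.Effective C → S.inter S.K C = 1 → S.inter C C ≤ -1 := by
    intro C hC h1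
    have hle := S.hodge_le S.K C hKpos
    rw [h1] at hle
    have h0 : S.inter C C ≤ 0 := by nlinarith
    have hpar := S.adjunction_parity C
    rw [h1] at hpar
    omega
  -- K·A + K·B = 1
  have hKsum : S.inter S.K A + S.inter S.K B = 1 := by
    have : S.inter (A + B) S.K = S.inter A S.K + S.inter B S.K := S.inter_add_left A B S.K
    rw [hsum] at this
    rw [S.inter_symm S.K A, S.inter_symm S.K B, ← this, S.inter_symm]
    exact hKE
  have hKA := S.K_nef A hA
  have hKB := S.K_nef B hB
  -- expansion of E²
  have hexp : S.inter A A + S.inter A B + (S.inter A B + S.inter B B) = -1 := by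
    have h1 := S.inter_add_left A B (A + B)
    rw [S.inter_symm A (A + B), S.inter_symm B (A + B),
      S.inter_add_left A B A, S.inter_add_left A B B,
      S.inter_symm B A, hsum, hE2] at h1
    omega
  have hAB : S.inter S.K A = 0 ∧ S.inter S.K B = 1 ∨ S.inter S.K A = 1 ∧ S.inter S.K B = 0 := by
    omega
  rcases hAB with ⟨h0, h1⟩ | ⟨h1, h0⟩
  · have hA2 := bound0 A hA hAne h0
    have hB2 := bound1 B hB h1
    omega
  · have hA2 := bound1 A hA h1
    have hB2 := bound0 B hB hBne h0
    omega
end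

section
/- Let S be a minimal surface of general type with q = 6, p_g = 9, no irrational pencil of genus > 1, whose canonical map has degree 3 onto a surface of degree 11 in P^8. Suppose 33 ≤ K² ≤ 35, K is ample, S contains no rational curves, and K = 2D + Γ with Γ > 0 effective, D effective with K·D ∈ {16, 17}, K·Γ = K² - 2K·D ∈ {1,2,3}. If K·Γ = 2 or 3 and Γ is reduced with p_a(Γ) > 0, Γ² < 0, then Γ² ≡ K² mod 8 fails in all admissible cases, giving a contradiction. -/
/-- An abstract model of a smooth minimal complex projective surface of general type with
numerical invariants: `Div` is the group of divisor classes, `inter` the intersection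
pairing, `Effective` and `Irreducible` the corresponding predicates on divisors,
`Reduced D` means `D` is a reduced effective divisor, `IsRationalCurve C` means `C` is a
rational curve on `S`, `K` the canonical class, `pa` the arithmetic genus (satisfying
adjunction), `q` and `pg` the irregularity and geometric genus, `canDeg` the degree of the
canonical map, `canImageDeg` the degree of the canonical image in `P^{p_g-1}`, and
`FiberOfPencil F g` means `F` is a fiber of a fibration onto a curve of genus `g`. -/
structure SurfaceGT where
  Div : Type
  [grp : AddCommGroup Div]
  inter : Div → Div → ℤ
  inter_symm : ∀ A B, inter A B = inter B A
  inter_add_left : ∀ A B C, inter (A + B) C = inter A C + inter B C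
  Effective : Div → Prop
  Irreducible : Div → Prop
  Reduced : Div → Prop
  IsRationalCurve : Div → Prop
  K : Div
  K_nef : ∀ C, Effective C → 0 ≤ inter K C
  pa : Div → ℤ
  pa_adjunction : ∀ D, 2 * pa D - 2 = inter K D + inter D D
  q : ℕ
  pg : ℕ
  canDeg : ℕ
  canImageDeg : ℕ
  FiberOfPencil : Div → ℕ → Prop

attribute [instance] SurfaceGT.grp

/-- The final contradiction in the proof of Theorem 6.1: let `S` be a minimal surface of
general type with `q = 6`, `p_g = 9`, no irrational pencil of genus `> 1`, whose canonical
map has degree 3 onto a surface of degree 11 in `P^8`.  Suppose `33 ≤ K² ≤ 35`, `K` is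
ample, `S` contains no rational curves, and `K = 2D + Γ` with `Γ > 0` effective, `D`
effective, `K·D ∈ {16, 17}` and `K·Γ = K² - 2K·D ∈ {1,2,3}`.  If `K·Γ = 2` or `3` and `Γ`
is reduced with `p_a(Γ) > 0` and `Γ² < 0`, then `Γ² ≡ K² (mod 8)` fails in all admissible
cases, giving a contradiction. -/
theorem stmt13 (S : SurfaceGT)
    (hq : S.q = 6) (hpg : S.pg = 9)
    (hnopencil : ∀ g : ℕ, 1 < g → ¬∃ F : S.Div, S.FiberOfPencil F g)
    (hcandeg : S.canDeg = 3) (himdeg : S.canImageDeg = 11)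
    (hK2lo : 33 ≤ S.inter S.K S.K) (hK2hi : S.inter S.K S.K ≤ 35)
    (hample : ∀ C : S.Div, S.Effective C → C ≠ 0 → 0 < S.inter S.K C)
    (hnorat : ∀ C : S.Div, ¬S.IsRationalCurve C)
    (D Γ : S.Div)
    (hDeff : S.Effective D)
    (hΓeff : S.Effective Γ) (hΓne : Γ ≠ 0)
    (hdec : S.K = (2 : ℤ) • D + Γ)
    (hKD : S.inter S.K D = 16 ∨ S.inter S.K D = 17)
    (hKΓeq : S.inter S.K Γ = S.inter S.K S.K - 2 * S.inter S.K D)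
    (hKΓmem : S.inter S.K Γ = 1 ∨ S.inter S.K Γ = 2 ∨ S.inter S.K Γ = 3)
    (hKΓ23 : S.inter S.K Γ = 2 ∨ S.inter S.K Γ = 3)
    (hred : S.Reduced Γ) (hpaΓ : 0 < S.pa Γ) (hΓ2 : S.inter Γ Γ < 0) :
    False := by
  have h2 : (2 : ℤ) • D = D + D := two_smul ℤ D
  have hKDe : S.inter S.K D = 2 * S.inter D D + S.inter D Γ := by
    rw [hdec, h2, S.inter_add_left, S.inter_add_left, S.inter_symm Γ D]; ring
  have hKGe : S.inter S.K Γ = 2 * S.inter D Γ + S.inter Γ Γ := by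
    rw [hdec, h2, S.inter_add_left, S.inter_add_left]; ring
  have hK2 : S.inter S.K S.K =
      4 * S.inter D D + 4 * S.inter D Γ + S.inter Γ Γ := by
    have : S.inter S.K S.K = S.inter ((2 : ℤ) • D + Γ) S.K := by rw [← hdec]
    rw [this, h2, S.inter_add_left, S.inter_add_left, S.inter_symm D S.K,
      S.inter_symm Γ S.K, hKDe, hKGe]; ring
  have hD := S.pa_adjunction D
  have hG := S.pa_adjunction Γ
  rw [hKDe, S.inter_symm D D] at hD
  rw [hKGe] at hG
  omega
end
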